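/- arXiv:1111.0043 — 9 statements merged into one kernel-verified Lean document; each statement's English description precedes it below -/
import Mathlib

section
/- Let p > 0, let α ∈ (0,1), and let c be a real number with 0 < c < αp (so that p(1+α) − c > 0). If δ is a real number with p/(p(1+α) − c) < δ < 1, then both one-shot deviations of the provider from the cooperative strategy are strictly unprofitable, namely: (1 − δ)·(1 − α)·p < δ·(1 − α)·(αp − c), and (1 − δ)·((1 − α)·p + c) < δ·(αp − c). -/
theorem provider_one_shot_deviations_unprofitable
    (p α c δ : ℝ) (hp : 0 < p) (hα0 : 0 < α) (hα1 : α < 1)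
    (hc0 : 0 < c) (hc : c < α * p)
    (hδlb : p / (p * (1 + α) - c) < δ) (hδub : δ < 1) :
    (1 - δ) * (1 - α) * p < δ * ((1 - α) * (α * p - c)) ∧
    (1 - δ) * ((1 - α) * p + c) < δ * (α * p - c) := by
  have hD : 0 < p * (1 + α) - c := by nlinarith
  have hkey : p < δ * (p * (1 + α) - c) := (div_lt_iff₀ hD).mp hδlb
  constructor <;> nlinarith [mul_pos hα0 hp]
end

section
/- Let u and p be real numbers with 0 < p < u, let α ∈ (0,1), let ρ > 0, and let γ ∈ [0,1]. If −γ·p + (u − p)·min(1 − γ, α) ≥ u − p(1 + ρ), then: if p·ρ ≤ u·(1 − α) one has γ ≤ ((1 − α)(p − u) + p·ρ)/p, and if p·ρ > u·(1 − α) one has γ ≤ p·ρ/u. -/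
theorem false_report_bound
    (u p α ρ γ : ℝ) (hp : 0 < p) (hpu : p < u) (hα0 : 0 < α) (hα1 : α < 1)
    (hρ : 0 < ρ) (hγ0 : 0 ≤ γ) (hγ1 : γ ≤ 1)
    (h : -γ * p + (u - p) * min (1 - γ) α ≥ u - p * (1 + ρ)) :
    (p * ρ ≤ u * (1 - α) → γ ≤ ((1 - α) * (p - u) + p * ρ) / p) ∧
    (p * ρ > u * (1 - α) → γ ≤ p * ρ / u) := by
  have hu : 0 < u := hp.trans hpu
  rcases le_total (1 - γ) α with hc | hc
  · rw [min_eq_left hc] at h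
    have hγu : γ ≤ p * ρ / u := by
      rw [le_div_iff₀ hu]; nlinarith
    constructor
    · intro hle
      rw [le_div_iff₀ hp]
      nlinarith [mul_nonneg hγ0 hu.le]
    · intro _; exact hγu
  · rw [min_eq_right hc] at h
    have hγb : γ ≤ ((1 - α) * (p - u) + p * ρ) / p := by
      rw [le_div_iff₀ hp]; nlinarith
    constructor
    · intro _; exact hγb
    · intro hgt
      rw [le_div_iff₀ hu]
      nlinarith
end

section
/- Let u and p be real numbers with 0 < p < u, let α ∈ (0,1), let γ ∈ [0,1], and let V be a real number. If −γ·p + (u − p)·min(1 − γ, α) ≥ V, then: if V ≥ α·u − p one has γ ≤ (α(u − p) − V)/p, and if V < α·u − p one has γ ≤ (u − p − V)/u. -/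
theorem false_report_bound_given_payoff
    (u p α γ V : ℝ) (hp : 0 < p) (hpu : p < u) (hα0 : 0 < α) (hα1 : α < 1)
    (hγ0 : 0 ≤ γ) (hγ1 : γ ≤ 1)
    (h : -γ * p + (u - p) * min (1 - γ) α ≥ V) :
    (V ≥ α * u - p → γ ≤ (α * (u - p) - V) / p) ∧
    (V < α * u - p → γ ≤ (u - p - V) / u) := by
  have hu : 0 < u := hp.trans hpu
  rcases le_total (1 - γ) α with hm | hm
  · rw [min_eq_left hm] at h
    constructor
    · intro hV; rw [le_div_iff₀ hp]; nlinarith [mul_nonneg (sub_nonneg.2 hm) (sub_nonneg.2 hpu.le)]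
    · intro hV; rw [le_div_iff₀ hu]; nlinarith
  · rw [min_eq_right hm] at h
    constructor
    · intro hV; rw [le_div_iff₀ hp]; nlinarith
    · intro hV; rw [le_div_iff₀ hu]; nlinarith [mul_nonneg (sub_nonneg.2 hm) (sub_nonneg.2 hpu.le)]
end

section
/- Let δ ∈ (0,1), let u and p be real numbers with 0 < p < u, let α ∈ (0,1), and let ρ > 0 be such that u > p(1 + ρ). Let a, b, l : ℕ → ℝ be nonnegative sequences with a(t) + b(t) + l(t) = 1 and b(t) ≤ α for all t. Define γ = (1 − δ)·∑_{t=0}^{∞} δ^t·a(t) and V = (1 − δ)·∑_{t=0}^{∞} δ^t·(−p·a(t) + (u − p)·b(t)). If V ≥ u − p(1 + ρ), then: if p·ρ ≤ u·(1 − α) one has γ ≤ ((1 − α)(p − u) + p·ρ)/p, and if p·ρ > u·(1 − α) one has γ ≤ p·ρ/u. -/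
theorem false_report_bound_sequence_form
    (δ u p α ρ : ℝ) (hδ0 : 0 < δ) (hδ1 : δ < 1)
    (hp : 0 < p) (hpu : p < u) (hα0 : 0 < α) (hα1 : α < 1)
    (hρ : 0 < ρ) (hout : u > p * (1 + ρ))
    (a b l : ℕ → ℝ)
    (ha : ∀ t, 0 ≤ a t) (hb : ∀ t, 0 ≤ b t) (hl : ∀ t, 0 ≤ l t)
    (hsum : ∀ t, a t + b t + l t = 1) (hbα : ∀ t, b t ≤ α)
    (γ V : ℝ)
    (hγ : γ = (1 - δ) * ∑' t : ℕ, δ ^ t * a t)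
    (hV : V = (1 - δ) * ∑' t : ℕ, δ ^ t * (-p * a t + (u - p) * b t))
    (hVlb : V ≥ u - p * (1 + ρ)) :
    (p * ρ ≤ u * (1 - α) → γ ≤ ((1 - α) * (p - u) + p * ρ) / p) ∧
    (p * ρ > u * (1 - α) → γ ≤ p * ρ / u) := by
  have hδ0' : (0:ℝ) ≤ δ := hδ0.le
  have hgeo : Summable (fun t : ℕ => δ ^ t) := summable_geometric_of_lt_one hδ0' hδ1
  have ha1 : ∀ t, a t ≤ 1 := fun t => by nlinarith [hb t, hl t, hsum t]
  have hab1 : ∀ t, a t + b t ≤ 1 := fun t => by nlinarith [hl t, hsum t]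
  have hpow : ∀ t : ℕ, (0:ℝ) ≤ δ ^ t := fun t => pow_nonneg hδ0' t
  have hAsum : Summable (fun t : ℕ => δ ^ t * a t) := by
    apply Summable.of_nonneg_of_le (fun t => mul_nonneg (hpow t) (ha t))
      (fun t => by nlinarith [hpow t, ha1 t, ha t]) hgeo
  have hBsum : Summable (fun t : ℕ => δ ^ t * b t) := by
    apply Summable.of_nonneg_of_le (fun t => mul_nonneg (hpow t) (hb t))
      (fun t => by nlinarith [hpow t, hbα t, hb t]) hgeo
  set A := ∑' t : ℕ, δ ^ t * a t with hA
  set B := ∑' t : ℕ, δ ^ t * b t with hB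
  have hG : ∑' t : ℕ, δ ^ t = (1 - δ)⁻¹ := tsum_geometric_of_lt_one hδ0' hδ1
  -- V = -p*A + (u-p)*B up to factor
  have hVeq : V = (1 - δ) * (-p * A + (u - p) * B) := by
    rw [hV]
    congr 1
    rw [show (fun t : ℕ => δ ^ t * (-p * a t + (u - p) * b t))
        = fun t : ℕ => (-p) * (δ ^ t * a t) + (u - p) * (δ ^ t * b t) by
      funext t; ring]
    rw [Summable.tsum_add (hAsum.mul_left _) (hBsum.mul_left _), tsum_mul_left, tsum_mul_left] <;> ring_nf
  -- B ≤ α * (1-δ)⁻¹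
  have hBle : B ≤ α * (1 - δ)⁻¹ := by
    calc B ≤ ∑' t : ℕ, α * δ ^ t := by
          apply Summable.tsum_le_tsum _ hBsum (hgeo.mul_left α)
          intro t; nlinarith [hpow t, hbα t]
      _ = α * (1 - δ)⁻¹ := by rw [tsum_mul_left, hG]
  -- A + B ≤ (1-δ)⁻¹
  have hABle : A + B ≤ (1 - δ)⁻¹ := by
    rw [← hG, ← Summable.tsum_add hAsum hBsum]
    apply Summable.tsum_le_tsum _ (hAsum.add hBsum) hgeo
    intro t
    nlinarith [hpow t, hab1 t]
  have h1δ : 0 < 1 - δ := by linarith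
  set g := γ
  set β := (1 - δ) * B with hβ
  have hβα : β ≤ α := by
    have := mul_le_mul_of_nonneg_left hBle h1δ.le
    rw [← hβ] at this
    calc β ≤ (1 - δ) * (α * (1 - δ)⁻¹) := this
      _ = α := by field_simp
  have hgβ : g + β ≤ 1 := by
    have := mul_le_mul_of_nonneg_left hABle h1δ.le
    calc g + β = (1 - δ) * (A + B) := by rw [hγ, hβ]; ring
      _ ≤ (1 - δ) * (1 - δ)⁻¹ := this
      _ = 1 := by field_simp
  have hcon : -p * g + (u - p) * β ≥ u - p * (1 + ρ) := by
    have : V = -p * g + (u - p) * β := by rw [hVeq, hγ, hβ]; ring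
    linarith [hVlb, this.symm.le]
  have hβnn : 0 ≤ β := mul_nonneg h1δ.le (tsum_nonneg fun t => mul_nonneg (hpow t) (hb t))
  have hup : 0 < u - p := by linarith
  constructor
  · intro _
    rw [le_div_iff₀ hp]
    nlinarith [mul_le_mul_of_nonneg_left hβα hup.le]
  · intro _
    rw [le_div_iff₀ (by linarith : (0:ℝ) < u)]
    have hβ1g : β ≤ 1 - g := by linarith
    nlinarith [mul_le_mul_of_nonneg_left hβ1g hup.le]
end

section
/- Let π be a real number with 0 < π < 1, let n be a natural number, and let μ : ℕ → ℝ be a sequence with 0 < μ(0) ≤ 1, with μ(k) ≤ 1 for all k ≤ n, and with μ(k+1) ≥ μ(k)/π for all k < n. Then π^n ≥ μ(0), and consequently n ≤ ⌊(Real.log (μ(0)))/(Real.log π)⌋. -/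
theorem bayesian_updating_bound
    (π : ℝ) (hπ0 : 0 < π) (hπ1 : π < 1) (n : ℕ) (μ : ℕ → ℝ)
    (hμ0 : 0 < μ 0) (hμ01 : μ 0 ≤ 1)
    (hμle : ∀ k ≤ n, μ k ≤ 1)
    (hrec : ∀ k < n, μ (k + 1) ≥ μ k / π) :
    π ^ n ≥ μ 0 ∧ (n : ℤ) ≤ ⌊Real.log (μ 0) / Real.log π⌋ := by
  have key : ∀ k ≤ n, μ 0 ≤ π ^ k * μ k := by
    intro k hk
    induction k with
    | zero => simp
    | succ m ih =>
      have hm : m ≤ n := Nat.le_of_succ_le hk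
      have h1 : μ 0 ≤ π ^ m * μ m := ih hm
      have h2 : μ (m + 1) ≥ μ m / π := hrec m (Nat.lt_of_succ_le hk)
      have : μ m ≤ π * μ (m + 1) := by
        rw [ge_iff_le, div_le_iff₀ hπ0] at h2
        linarith [h2]
      calc μ 0 ≤ π ^ m * μ m := h1
        _ ≤ π ^ m * (π * μ (m + 1)) := by
            exact mul_le_mul_of_nonneg_left this (pow_nonneg hπ0.le m)
        _ = π ^ (m + 1) * μ (m + 1) := by ring
  have h1 : μ 0 ≤ π ^ n := by
    calc μ 0 ≤ π ^ n * μ n := key n le_rfl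
      _ ≤ π ^ n * 1 := mul_le_mul_of_nonneg_left (hμle n le_rfl) (pow_nonneg hπ0.le n)
      _ = π ^ n := mul_one _
  refine ⟨h1, ?_⟩
  rw [Int.le_floor]
  have hlogπ : Real.log π < 0 := Real.log_neg hπ0 hπ1
  have hlog : Real.log (μ 0) ≤ n * Real.log π := by
    calc Real.log (μ 0) ≤ Real.log (π ^ n) := Real.log_le_log hμ0 h1
      _ = n * Real.log π := by rw [Real.log_pow]
  push_cast
  rw [le_div_iff_of_neg hlogπ]
  linarith
end

section
/- Let p > 0, let α ∈ (0,1), let c satisfy 0 < c < αp, let δ ∈ (0,1), let ε̄ > p, and let V̄ ≥ αp − c. Define π̄ = (δ·(V̄ − αp + c) + (1 − δ)·p) / (δ·(V̄ − αp + c) + (1 − δ)·ε̄). Then 0 < π̄ < 1, and for every natural number n and every sequence μ : ℕ → ℝ with 0 < μ(0) ≤ 1, with μ(k) ≤ 1 for all k ≤ n, and with μ(k+1) ≥ μ(k)/π̄ for all k < n, one has n ≤ ⌊(Real.log (μ(0)))/(Real.log π̄)⌋. -/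
theorem theorem_one_low_quality_bound
    (p α c δ εbar Vbar : ℝ) (hp : 0 < p) (hα0 : 0 < α) (hα1 : α < 1)
    (hc0 : 0 < c) (hc : c < α * p) (hδ0 : 0 < δ) (hδ1 : δ < 1)
    (hε : εbar > p) (hV : Vbar ≥ α * p - c)
    (πbar : ℝ)
    (hπbar : πbar = (δ * (Vbar - α * p + c) + (1 - δ) * p) /
                    (δ * (Vbar - α * p + c) + (1 - δ) * εbar)) :
    0 < πbar ∧ πbar < 1 ∧
    ∀ (n : ℕ) (μ : ℕ → ℝ), 0 < μ 0 → μ 0 ≤ 1 →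
      (∀ k ≤ n, μ k ≤ 1) → (∀ k < n, μ (k + 1) ≥ μ k / πbar) →
      (n : ℤ) ≤ ⌊Real.log (μ 0) / Real.log πbar⌋ := by
  set D := δ * (Vbar - α * p + c) with hD
  have hDpos : 0 ≤ D := by
    have : 0 ≤ Vbar - α * p + c := by linarith
    positivity
  have hA : 0 < D + (1 - δ) * p := by nlinarith
  have hB : 0 < D + (1 - δ) * εbar := by nlinarith
  have hAB : D + (1 - δ) * p < D + (1 - δ) * εbar := by nlinarith
  have hπ0 : 0 < πbar := by rw [hπbar]; positivity
  have hπ1 : πbar < 1 := by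
    rw [hπbar, div_lt_one hB]; exact hAB
  refine ⟨hπ0, hπ1, ?_⟩
  intro n μ hμ0 hμ01 hμle hstep
  have hlogπ : Real.log πbar < 0 := Real.log_neg hπ0 hπ1
  -- show μ n ≥ μ 0 / πbar ^ n and μ n > 0
  have key : ∀ k ≤ n, 0 < μ k ∧ μ 0 ≤ μ k * πbar ^ k := by
    intro k hk
    induction k with
    | zero => exact ⟨hμ0, by simp⟩
    | succ m ih =>
      have hm : m ≤ n := le_of_lt (Nat.lt_of_succ_le hk)
      obtain ⟨hpos, hle⟩ := ih hm
      have hstepm := hstep m (Nat.lt_of_succ_le hk)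
      have hpos' : 0 < μ (m + 1) := lt_of_lt_of_le (by positivity) hstepm
      refine ⟨hpos', ?_⟩
      have : μ m ≤ μ (m + 1) * πbar := by
        rw [ge_iff_le, div_le_iff₀ hπ0] at hstepm; exact hstepm
      calc μ 0 ≤ μ m * πbar ^ m := hle
        _ ≤ (μ (m + 1) * πbar) * πbar ^ m := by
            apply mul_le_mul_of_nonneg_right this (by positivity)
        _ = μ (m + 1) * πbar ^ (m + 1) := by ring
  obtain ⟨hpos, hle⟩ := key n le_rfl
  have hμn1 : μ n ≤ 1 := hμle n le_rfl
  have h1 : μ 0 ≤ πbar ^ n := by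
    calc μ 0 ≤ μ n * πbar ^ n := hle
      _ ≤ 1 * πbar ^ n := by apply mul_le_mul_of_nonneg_right hμn1 (by positivity)
      _ = πbar ^ n := one_mul _
  have hlog : Real.log (μ 0) ≤ n * Real.log πbar := by
    calc Real.log (μ 0) ≤ Real.log (πbar ^ n) := Real.log_le_log (by positivity) h1
      _ = n * Real.log πbar := by rw [Real.log_pow]
  have : (n : ℝ) ≤ Real.log (μ 0) / Real.log πbar := by
    rw [le_div_iff_of_neg hlogπ]; linarith
  exact Int.le_floor.mpr (by exact_mod_cast this)
end

section
/- Let u and p be real numbers with 0 < p < u, let α ∈ (0,1), let δ ∈ (0,1), let ε > 0, and let γ ∈ [0,1]. Set V̂ = α·(u − p) − ((1 − δ)/δ)·ε and assume ((1 − δ)/δ)·ε ≤ p·(1 − α) (equivalently V̂ ≥ α·u − p). If −γ·p + (u − p)·min(1 − γ, α) ≥ V̂, then γ ≤ ((1 − δ)·ε)/(δ·p). -/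
theorem false_report_bound_kP_one
    (u p α δ ε γ : ℝ) (hp : 0 < p) (hpu : p < u) (hα0 : 0 < α) (hα1 : α < 1)
    (hδ0 : 0 < δ) (hδ1 : δ < 1) (hε : 0 < ε)
    (hγ0 : 0 ≤ γ) (hγ1 : γ ≤ 1)
    (Vhat : ℝ) (hVhat : Vhat = α * (u - p) - ((1 - δ) / δ) * ε)
    (hcase : ((1 - δ) / δ) * ε ≤ p * (1 - α))
    (h : -γ * p + (u - p) * min (1 - γ) α ≥ Vhat) :
    γ ≤ ((1 - δ) * ε) / (δ * p) := by
  have key : γ * p ≤ ((1 - δ) / δ) * ε := by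
    rcases le_total (1 - γ) α with hm | hm
    · rw [min_eq_left hm] at h
      nlinarith
    · rw [min_eq_right hm] at h
      nlinarith
  rw [le_div_iff₀ (by positivity)]
  rw [div_mul_eq_mul_div, le_div_iff₀ hδ0] at key
  nlinarith
end

section
/- Let u and p be real numbers with 0 < p < u, let α ∈ (0,1), let c satisfy 0 < c < αp, and let ρ > 0 satisfy u > p(1 + ρ). Consider the points A = (α(u − p), αp − c), B = (αu − p, p − c), and C = (−p, p) in ℝ × ℝ. Then for every point (x, y) in the convex hull of {A, B, C} with x ≥ u − p(1 + ρ): if ρ ≤ u(1 − α)/p then y ≤ α·u − c − u + p(1 + ρ), and if ρ > u(1 − α)/p then y ≤ p + c·(p·ρ − u)/(α·u). -/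
theorem max_provider_payoff_on_feasible_set
    (u p α c ρ : ℝ) (hp : 0 < p) (hpu : p < u) (hα0 : 0 < α) (hα1 : α < 1)
    (hc0 : 0 < c) (hc : c < α * p) (hρ : 0 < ρ) (hout : u > p * (1 + ρ)) :
    ∀ x y : ℝ,
      (x, y) ∈ convexHull ℝ
        ({(α * (u - p), α * p - c), (α * u - p, p - c), (-p, p)} : Set (ℝ × ℝ)) →
      x ≥ u - p * (1 + ρ) →
      (ρ ≤ u * (1 - α) / p → y ≤ α * u - c - u + p * (1 + ρ)) ∧
      (ρ > u * (1 - α) / p → y ≤ p + c * (p * ρ - u) / (α * u)) := by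
  intro x y hxy hx
  have hlin1 : IsLinearMap ℝ (fun q : ℝ × ℝ => q.1 + q.2) :=
    ⟨fun a b => by simp [Prod.fst_add, Prod.snd_add]; ring,
     fun t a => by simp [Prod.smul_fst, Prod.smul_snd]; ring⟩
  have hlin2 : IsLinearMap ℝ (fun q : ℝ × ℝ => c * q.1 + α * u * q.2) :=
    ⟨fun a b => by simp [Prod.fst_add, Prod.snd_add]; ring,
     fun t a => by simp [Prod.smul_fst, Prod.smul_snd]; ring⟩
  have h1 : x + y ≤ α * u - c := by
    have hsub : ({(α * (u - p), α * p - c), (α * u - p, p - c), (-p, p)} : Set (ℝ × ℝ)) ⊆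
        {q : ℝ × ℝ | q.1 + q.2 ≤ α * u - c} := by
      intro q hq
      simp only [Set.mem_insert_iff, Set.mem_singleton_iff] at hq
      rcases hq with h | h | h <;> subst h <;> simp only [Set.mem_setOf_eq] <;> nlinarith
    exact convexHull_min hsub (convex_halfSpace_le hlin1 _) hxy
  have h2 : c * x + α * u * y ≤ α * u * p - c * p := by
    have hsub : ({(α * (u - p), α * p - c), (α * u - p, p - c), (-p, p)} : Set (ℝ × ℝ)) ⊆
        {q : ℝ × ℝ | c * q.1 + α * u * q.2 ≤ α * u * p - c * p} := by
      intro q hq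
      simp only [Set.mem_insert_iff, Set.mem_singleton_iff] at hq
      rcases hq with h | h | h <;> subst h <;> simp only [Set.mem_setOf_eq] <;>
        nlinarith [mul_pos (mul_pos (sub_pos.mpr hα1) hp)
          (show (0:ℝ) < α * u - c by nlinarith)]
    exact convexHull_min hsub (convex_halfSpace_le hlin2 _) hxy
  constructor
  · intro _
    linarith
  · intro _
    have hau : 0 < α * u := by nlinarith
    have hkey : (y - p) * (α * u) ≤ c * (p * ρ - u) := by nlinarith
    have := (le_div_iff₀ hau).mpr hkey
    linarith
end

section
/- Let u and p be real numbers with 0 < p < u, let α ∈ (0,1), let c satisfy 0 < c < αp, and let ρ > 0 satisfy α(u − p) > u − p(1 + ρ). Consider the points A = (α(u − p), αp − c), B = (αu − p, p − c), C = (−p, p), and O = (u − p(1 + ρ), 0) in ℝ × ℝ. Then for every point (x, y) in the convex hull of {A, B, C, O}: if x ≥ α(u − p) and y ≥ αp − c, then (x, y) = A. In particular, the payoff profile A = (α(u − p), αp − c) is pareto-optimal in the feasible payoff set. -/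
theorem cooperative_profile_pareto_optimal
    (u p α c ρ : ℝ) (hp : 0 < p) (hpu : p < u) (hα0 : 0 < α) (hα1 : α < 1)
    (hc0 : 0 < c) (hc : c < α * p) (hρ : 0 < ρ)
    (hgain : α * (u - p) > u - p * (1 + ρ)) :
    ∀ x y : ℝ,
      (x, y) ∈ convexHull ℝ
        ({(α * (u - p), α * p - c), (α * u - p, p - c), (-p, p),
          (u - p * (1 + ρ), 0)} : Set (ℝ × ℝ)) →
      x ≥ α * (u - p) → y ≥ α * p - c →
      (x, y) = (α * (u - p), α * p - c) := by
  intro x y hmem hx hy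
  have hden : 0 < α * (u - p) + p := by nlinarith
  set M : ℝ := 1 + (p * (1 - α) + c) / (α * (u - p) + p) with hMdef
  have hfrac : (p * (1 - α) + c) / (α * (u - p) + p) * (α * (u - p) + p)
      = p * (1 - α) + c := div_mul_cancel₀ _ (ne_of_gt hden)
  have hfrac0 : 0 ≤ (p * (1 - α) + c) / (α * (u - p) + p) := by
    apply div_nonneg _ (le_of_lt hden); nlinarith
  have hM1 : 1 ≤ M := by simp [hMdef]; linarith
  have lin1 : IsLinearMap ℝ (fun q : ℝ × ℝ => q.1) :=
    ⟨fun a b => rfl, fun r a => rfl⟩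
  have lin2 : IsLinearMap ℝ (fun q : ℝ × ℝ => M * q.1 + q.2) := by
    constructor
    · intro a b; simp [Prod.fst_add, Prod.snd_add]; ring
    · intro r a; simp [Prod.smul_fst, Prod.smul_snd, smul_eq_mul]; ring
  have hsub1 : convexHull ℝ
      ({(α * (u - p), α * p - c), (α * u - p, p - c), (-p, p),
        (u - p * (1 + ρ), 0)} : Set (ℝ × ℝ)) ⊆ {q | q.1 ≤ α * (u - p)} := by
    apply convexHull_min _ (convex_halfSpace_le lin1 _)
    rintro q (rfl | rfl | rfl | rfl) <;> simp <;> nlinarith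
  have hsub2 : convexHull ℝ
      ({(α * (u - p), α * p - c), (α * u - p, p - c), (-p, p),
        (u - p * (1 + ρ), 0)} : Set (ℝ × ℝ)) ⊆
      {q | M * q.1 + q.2 ≤ M * (α * (u - p)) + (α * p - c)} := by
    apply convexHull_min _ (convex_halfSpace_le lin2 _)
    have hM0 : (0:ℝ) < M := by linarith
    have hB : (0:ℝ) ≤ (M - 1) * (p - α * p) :=
      mul_nonneg (by linarith) (by nlinarith)
    have hO : (0:ℝ) < M * (α * (u - p) - (u - p * (1 + ρ))) :=
      mul_pos hM0 (by linarith)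
    have hMden : M * (α * (u - p) + p) = (α * (u - p) + p) + (p * (1 - α) + c) := by
      rw [hMdef, add_mul, one_mul, hfrac]
    rintro q (rfl | rfl | rfl | rfl) <;> simp <;> nlinarith
  have h1 : x ≤ α * (u - p) := hsub1 hmem
  have hxe : x = α * (u - p) := le_antisymm h1 hx
  have h2 : M * x + y ≤ M * (α * (u - p)) + (α * p - c) := hsub2 hmem
  have hye : y = α * p - c := by
    rw [hxe] at h2; linarith
  rw [hxe, hye]
end
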